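/- arXiv:1302.5777 — 2 statements merged into one kernel-verified Lean document; each statement's English description precedes it below -/
import Mathlib

section
/- Let α, β, γ be a standard system of continuous real functions on a neighbourhood D of 0, and set A₀ = (0, α(0)), C₀ = (0, γ(0)). Then: (i) there exists ε > 0 such that for every x with |x| < ε, writing P = (x, β(x)), there exist unique points C(P) ∈ γ̄ with C₀ ≠ P and A₀, P, C(P) collinear, A(P) ∈ ᾱ with A₀ ≠ P and C₀, P, A(P) collinear, and B(P) ∈ β̄ with A(P), B(P), C(P) collinear; moreover the maps x ↦ A(P), x ↦ B(P) and x ↦ C(P) are continuous functions from (−ε, ε) to ℝ². (ii) Every point B̂ of the graph β̄ whose first coordinate is sufficiently close to 0 satisfies B̂ = B(P) for some such P. -/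
/-!
Collinearity is tested by the signed area. For `x` near `0` the line through the apex
`A₀ = (0, α 0)` and `P = (x, β x)` is nearly vertical: it passes below the graph of `γ` at
abscissa `x` and above it at whichever of `±r` lies on the side of `x`, so it meets that graph at
an abscissa `u` with `x` between `0` and `u`; symmetrically for `C₀` and the graph of `α`. The
segment `A(P) C(P)` meets the graph of `β`, which passes above `A(P)` and below `C(P)`. The line
condition makes each of these points unique, and a map into a compact interval that is the unique
solution of a continuous equation is continuous. Since `x` lies between `0` and the abscissa of
`B(P)`, the intermediate value theorem shows that these abscissae cover a neighbourhood of `0`.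
-/

/-- A straight (affine) line in the real plane. -/
def IsLine (L : Set (ℝ × ℝ)) : Prop :=
  ∃ p v : ℝ × ℝ, v ≠ 0 ∧ L = {q | ∃ t : ℝ, q = p + t • v}

/-- Three points of the plane are collinear. -/
def Collin (p q r : ℝ × ℝ) : Prop := Collinear ℝ ({p, q, r} : Set (ℝ × ℝ))

/-- The graph over `D` of a real function. -/
def FunGraph (f : ℝ → ℝ) (D : Set ℝ) : Set (ℝ × ℝ) := {p | p.1 ∈ D ∧ p.2 = f p.1}

/-- A standard system of continuous real functions: three continuous functions on an
open neighbourhood `D` of `0` with `α < β < γ` on `D`, such that every line through a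
point of one of the three graphs meets each of the other two graphs in at most one
point. -/
structure StdSystem (D : Set ℝ) (α β γ : ℝ → ℝ) : Prop where
  isOpen : IsOpen D
  zeroMem : (0 : ℝ) ∈ D
  contA : ContinuousOn α D
  contB : ContinuousOn β D
  contC : ContinuousOn γ D
  ltAB : ∀ x ∈ D, α x < β x
  ltBC : ∀ x ∈ D, β x < γ x
  lineCond : ∀ L : Set (ℝ × ℝ), IsLine L →
    ∀ f g : ℝ → ℝ, f ∈ ({α, β, γ} : Set (ℝ → ℝ)) → g ∈ ({α, β, γ} : Set (ℝ → ℝ)) →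
      f ≠ g → (L ∩ FunGraph f D).Nonempty → (L ∩ FunGraph g D).Subsingleton

open Set Filter Topology

/-- Twice the signed area of the triangle `p q r`. -/
def signedArea (p q r : ℝ × ℝ) : ℝ :=
  (q.1 - p.1) * (r.2 - p.2) - (q.2 - p.2) * (r.1 - p.1)

theorem collin_iff_signedArea_eq_zero (p q r : ℝ × ℝ) :
    Collin p q r ↔ signedArea p q r = 0 := by
  constructor
  · intro h
    obtain ⟨v, hv⟩ := (collinear_iff_of_mem (mem_insert p {q, r})).1 h
    obtain ⟨s, rfl⟩ := hv q (by simp)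
    obtain ⟨t, rfl⟩ := hv r (by simp)
    simp only [signedArea, vadd_eq_add, Prod.fst_add, Prod.snd_add, Prod.smul_fst, Prod.smul_snd,
      smul_eq_mul]
    ring
  · intro h
    rcases eq_or_ne q p with rfl | hqp
    · simpa [Collin] using collinear_pair ℝ q r
    set n := (q.1 - p.1) * (q.1 - p.1) + (q.2 - p.2) * (q.2 - p.2)
    have hn : n ≠ 0 := fun h0 =>
      hqp (Prod.ext_iff.2 (by simpa [sub_eq_zero] using mul_self_add_mul_self_eq_zero.1 h0))
    rw [Collin, collinear_iff_of_mem (mem_insert p {q, r})]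
    refine ⟨q - p, ?_⟩
    simp only [mem_insert_iff, mem_singleton_iff, forall_eq_or_imp, forall_eq]
    -- `r - p` is parallel to `q - p`, hence equal to its orthogonal projection onto `q - p`
    refine ⟨⟨0, by simp⟩, ⟨1, by simp⟩,
      ⟨((r.1 - p.1) * (q.1 - p.1) + (r.2 - p.2) * (q.2 - p.2)) / n, ?_⟩⟩
    simp only [signedArea] at h
    ext <;> simp only [vadd_eq_add, Prod.fst_add, Prod.snd_add, Prod.smul_fst, Prod.smul_snd,
      smul_eq_mul, Prod.fst_sub, Prod.snd_sub] <;>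
      rw [div_mul_eq_mul_div, eq_comm, div_add' _ _ _ hn, div_eq_iff hn]
    · linear_combination (q.2 - p.2) * h
    · linear_combination -(q.1 - p.1) * h

theorem collin_swap {p q r : ℝ × ℝ} : Collin p q r ↔ Collin p r q := by
  rw [Collin, Collin, pair_comm]

theorem mk_ne_mk_of_ne {f g : ℝ → ℝ} {a c : ℝ} (h : f c ≠ g c) :
    ((a, f a) : ℝ × ℝ) ≠ (c, g c) := by
  intro heq
  obtain ⟨rfl, hfg⟩ := Prod.mk.inj heq
  exact h hfg

theorem isLine_affineSpan_pair {p q : ℝ × ℝ} (h : p ≠ q) :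
    IsLine (line[ℝ, p, q] : Set (ℝ × ℝ)) := by
  refine ⟨p, q - p, sub_ne_zero.2 h.symm, ?_⟩
  ext z
  simp [mem_affineSpan_pair_iff_exists_lineMap_eq, AffineMap.lineMap_apply, eq_comm, add_comm]

theorem exists_collin_of_mul_nonpos {p q : ℝ × ℝ} {f : ℝ → ℝ} {a c : ℝ}
    (hf : ContinuousOn f (uIcc a c))
    (h : signedArea p q (a, f a) * signedArea p q (c, f c) ≤ 0) :
    ∃ u ∈ uIcc a c, Collin p q (u, f u) := by
  have hS : ContinuousOn (fun u => signedArea p q (u, f u)) (uIcc a c) := by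
    simp only [signedArea]; fun_prop
  have h0 : (0 : ℝ) ∈ uIcc (signedArea p q (a, f a)) (signedArea p q (c, f c)) :=
    mem_uIcc.2 (((mul_nonpos_iff.1 h).symm).imp id And.symm)
  obtain ⟨u, hu, hzero⟩ := intermediate_value_uIcc hS h0
  exact ⟨u, hu, (collin_iff_signedArea_eq_zero _ _ _).2 hzero⟩

theorem exists_collin_of_lt_of_gt {f : ℝ → ℝ} {a c yA yC : ℝ} (hf : ContinuousOn f (uIcc a c))
    (hA : yA < f a) (hC : f c < yC) : ∃ u ∈ uIcc a c, Collin (a, yA) (c, yC) (u, f u) := by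
  refine exists_collin_of_mul_nonpos hf ?_
  have : signedArea (a, yA) (c, yC) (a, f a) * signedArea (a, yA) (c, yC) (c, f c) =
      -((c - a) ^ 2 * ((f a - yA) * (yC - f c))) := by
    simp only [signedArea]; ring
  rw [this, neg_nonpos]
  exact mul_nonneg (sq_nonneg _) (mul_pos (sub_pos.2 hA) (sub_pos.2 hC)).le

theorem ContinuousOn.of_isCompact_of_unique_eq {X Y Z : Type*} [TopologicalSpace X]
    [TopologicalSpace Y] [TopologicalSpace Z] [T1Space Z] {U : Set X} {K : Set Y}
    (hK : IsCompact K) {H : X × Y → Z} (hH : ContinuousOn H (U ×ˢ K)) {c : Z} {g : X → Y}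
    (hgK : MapsTo g U K) (hg : ∀ x ∈ U, H (x, g x) = c)
    (huniq : ∀ x ∈ U, ∀ y ∈ K, H (x, y) = c → y = g x) : ContinuousOn g U := by
  intro x₀ hx₀
  refine hK.tendsto_nhds_of_unique_mapClusterPt (eventually_nhdsWithin_of_forall hgK)
    fun y hyK hy => huniq x₀ hx₀ y hyK ?_
  by_contra hne
  have hW := hH (x₀, y) ⟨hx₀, hyK⟩ (isOpen_compl_singleton.mem_nhds hne)
  rw [nhdsWithin_prod_eq] at hW
  obtain ⟨A, hA, B, hB, hAB⟩ := mem_prod_iff.1 hW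
  obtain ⟨B', hB', hB'B⟩ := mem_nhdsWithin_iff_exists_mem_nhds_inter.1 hB
  obtain ⟨x, hxB', hxA, hxU⟩ : ∃ x, g x ∈ B' ∧ x ∈ A ∧ x ∈ U :=
    ((hy.frequently hB').and_eventually (inter_mem hA self_mem_nhdsWithin)).exists
  exact hAB ⟨hxA, hB'B ⟨hxB', hgK hxU⟩⟩ (hg x hxU)

theorem mul_nonpos_of_mul_nonneg_of_mul_nonpos {a b s : ℝ} (hs : s ≠ 0) (ha : 0 ≤ a * s)
    (hb : b * s ≤ 0) : a * b ≤ 0 := by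
  nlinarith [mul_self_pos.2 hs, mul_nonpos_of_nonneg_of_nonpos ha hb]

theorem eventually_exists_collin_through_apex {a r : ℝ} {b f : ℝ → ℝ} (hr : 0 < r)
    (hb : ContinuousAt b 0) (hf : ContinuousOn f (Icc (-r) r))
    (hsep : ∀ x ∈ Icc (-r) r, 0 < (f x - b x) * (b 0 - a)) :
    ∀ᶠ x in 𝓝 0, ∃ u ∈ Icc (-r) r, x ∈ uIcc 0 u ∧ Collin (0, a) (x, b x) (u, f u) := by
  set s := b 0 - a
  have hs : s ≠ 0 := right_ne_zero_of_mul (hsep 0 ⟨by linarith, hr.le⟩).ne'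
  have hdiag : ∀ x, signedArea (0, a) (x, b x) (x, f x) * s = x * ((f x - b x) * s) := by
    intro x; simp only [signedArea]; ring
  -- at `x = 0` the line is the `y`-axis and the signed area is `-s * u`
  have hend : ∀ u ≠ 0, ∀ᶠ x in 𝓝 0, signedArea (0, a) (x, b x) (u, f u) * s * u < 0 := by
    intro u hu
    have hcont : ContinuousAt (fun x => signedArea (0, a) (x, b x) (u, f u) * s * u) 0 := by
      simp only [signedArea]; fun_prop
    refine hcont.eventually_lt continuousAt_const ?_
    have h0 : signedArea (0, a) (0, b 0) (u, f u) * s * u = -((s * u) * (s * u)) := by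
      simp only [signedArea, s]; ring
    simpa only [h0, Left.neg_neg_iff] using mul_self_pos.2 (mul_ne_zero hs hu)
  filter_upwards [Icc_mem_nhds (neg_lt_zero.2 hr) hr, hend r hr.ne',
    hend (-r) (neg_ne_zero.2 hr.ne')] with x hx hright hleft
  have hright' := neg_of_mul_neg_left hright hr.le
  have hleft' := pos_of_mul_neg_left hleft (neg_nonpos.2 hr.le)
  rcases le_total 0 x with h0 | h0
  · obtain ⟨u, hu, hcol⟩ := exists_collin_of_mul_nonpos (p := (0, a)) (q := (x, b x))
      (hf.mono (uIcc_subset_Icc hx ⟨by linarith, le_rfl⟩))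
      (mul_nonpos_of_mul_nonneg_of_mul_nonpos hs
        (hdiag x ▸ mul_nonneg h0 (hsep x hx).le) hright'.le)
    rw [uIcc_of_le hx.2] at hu
    exact ⟨u, ⟨by linarith [hu.1], hu.2⟩, mem_uIcc_of_le h0 hu.1, hcol⟩
  · obtain ⟨u, hu, hcol⟩ := exists_collin_of_mul_nonpos (p := (0, a)) (q := (x, b x))
      (hf.mono (uIcc_subset_Icc ⟨le_rfl, by linarith⟩ hx))
      (mul_nonpos_of_mul_nonneg_of_mul_nonpos hs hleft'.le
        (hdiag x ▸ mul_nonpos_of_nonpos_of_nonneg h0 (hsep x hx).le))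
    rw [uIcc_of_le hx.1] at hu
    exact ⟨u, ⟨hu.1, by linarith [hu.2]⟩, mem_uIcc_of_ge hu.2 h0, hcol⟩

theorem mem_uIcc_of_mem_uIcc_of_mem_uIcc {α : Type*} [LinearOrder α] {o x a c u : α}
    (ha : x ∈ uIcc o a) (hc : x ∈ uIcc o c) (hu : u ∈ uIcc a c) : x ∈ uIcc o u := by
  simp only [mem_uIcc] at *
  grind

theorem Icc_subset_image_of_mem_uIcc {g : ℝ → ℝ} {δ : ℝ} (hδ : 0 < δ)
    (hg : ContinuousOn g (Icc (-δ) δ)) (hout : ∀ x ∈ Icc (-δ) δ, x ∈ uIcc 0 (g x)) :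
    Icc (-δ) δ ⊆ g '' Icc (-δ) δ := by
  have hleft := hout (-δ) (left_mem_Icc.2 (by linarith))
  have hright := hout δ (right_mem_Icc.2 (by linarith))
  rw [mem_uIcc] at hleft hright
  refine (Icc_subset_Icc ?_ ?_).trans (intermediate_value_Icc (by linarith) hg)
  · rcases hleft with h | h <;> linarith [h.1, h.2]
  · rcases hright with h | h <;> linarith [h.1, h.2]

def IsUniqueCollinPoint (S : Set (ℝ × ℝ)) (p q z : ℝ × ℝ) : Prop :=
  z ∈ S ∧ Collin p q z ∧ ∀ Q ∈ S, Collin p q Q → Q = z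

namespace StdSystem

variable {D : Set ℝ} {α β γ : ℝ → ℝ}

theorem ltAC (hsys : StdSystem D α β γ) {x : ℝ} (hx : x ∈ D) : α x < γ x :=
  (hsys.ltAB x hx).trans (hsys.ltBC x hx)

theorem continuousOn_of_mem (hsys : StdSystem D α β γ) {f : ℝ → ℝ}
    (hf : f ∈ ({α, β, γ} : Set (ℝ → ℝ))) : ContinuousOn f D := by
  rcases hf with rfl | rfl | rfl
  exacts [hsys.contA, hsys.contB, hsys.contC]

theorem eq_of_collin (hsys : StdSystem D α β γ) {f g : ℝ → ℝ}
    (hf : f ∈ ({α, β, γ} : Set (ℝ → ℝ))) (hg : g ∈ ({α, β, γ} : Set (ℝ → ℝ))) (hfg : f ≠ g)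
    {p q z w : ℝ × ℝ} (hpq : p ≠ q) (hp : p ∈ FunGraph f D) (hz : z ∈ FunGraph g D)
    (hw : w ∈ FunGraph g D) (hcz : Collin p q z) (hcw : Collin p q w) : z = w :=
  hsys.lineCond _ (isLine_affineSpan_pair hpq) f g hf hg hfg
    ⟨p, left_mem_affineSpan_pair ℝ p q, hp⟩
    ⟨hcz.mem_affineSpan_of_mem_of_ne (by simp) (by simp) (by simp) hpq, hz⟩
    ⟨hcw.mem_affineSpan_of_mem_of_ne (by simp) (by simp) (by simp) hpq, hw⟩

theorem continuousOn_and_isUniqueCollinPoint (hsys : StdSystem D α β γ) {f h : ℝ → ℝ}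
    (hf : f ∈ ({α, β, γ} : Set (ℝ → ℝ))) (hh : h ∈ ({α, β, γ} : Set (ℝ → ℝ))) (hhf : h ≠ f)
    {U K : Set ℝ} (hK : IsCompact K) (hKD : K ⊆ D) {p q : ℝ → ℝ × ℝ} (hp : ContinuousOn p U)
    (hq : ContinuousOn q U) (hpq : ∀ x ∈ U, p x ≠ q x) (hph : ∀ x ∈ U, p x ∈ FunGraph h D)
    {g : ℝ → ℝ} (hgK : MapsTo g U K) (hg : ∀ x ∈ U, Collin (p x) (q x) (g x, f (g x))) :
    ContinuousOn (fun x => (g x, f (g x))) U ∧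
      ∀ x ∈ U, IsUniqueCollinPoint (FunGraph f D) (p x) (q x) (g x, f (g x)) := by
  have hfK : ContinuousOn f K := (hsys.continuousOn_of_mem hf).mono hKD
  have huniq : ∀ x ∈ U, ∀ Q ∈ FunGraph f D, Collin (p x) (q x) Q → Q = (g x, f (g x)) :=
    fun x hx Q hQ hQc =>
      hsys.eq_of_collin hh hf hhf (hpq x hx) (hph x hx) hQ ⟨hKD (hgK hx), rfl⟩ hQc (hg x hx)
  have hgc : ContinuousOn g U := by
    refine ContinuousOn.of_isCompact_of_unique_eq hK
      (H := fun z => signedArea (p z.1) (q z.1) (z.2, f z.2)) ?_ hgK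
      (fun x hx => (collin_iff_signedArea_eq_zero _ _ _).1 (hg x hx))
      fun x hx y hy hy0 => congrArg Prod.fst
        (huniq x hx (y, f y) ⟨hKD hy, rfl⟩ ((collin_iff_signedArea_eq_zero _ _ _).2 hy0))
    have hp' : ContinuousOn (fun z : ℝ × ℝ => p z.1) (U ×ˢ K) :=
      hp.comp continuousOn_fst fun z hz => hz.1
    have hq' : ContinuousOn (fun z : ℝ × ℝ => q z.1) (U ×ˢ K) :=
      hq.comp continuousOn_fst fun z hz => hz.1
    have hf' : ContinuousOn (fun z : ℝ × ℝ => f z.2) (U ×ˢ K) :=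
      hfK.comp continuousOn_snd fun z hz => hz.2
    exact ((hq'.fst.sub hp'.fst).mul (hf'.sub hp'.snd)).sub
      ((hq'.snd.sub hp'.snd).mul (continuousOn_snd.sub hp'.fst))
  exact ⟨hgc.prodMk (hfK.comp hgc hgK), fun x hx => ⟨⟨hKD (hgK hx), rfl⟩, hg x hx, huniq x hx⟩⟩

theorem exists_outer_coords (hsys : StdSystem D α β γ) :
    ∃ r ε : ℝ, 0 < ε ∧ Ioo (-ε) ε ⊆ Icc (-r) r ∧ Icc (-r) r ⊆ D ∧ ∃ af cf : ℝ → ℝ,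
      ∀ x ∈ Ioo (-ε) ε,
        (af x ∈ Icc (-r) r ∧ x ∈ uIcc 0 (af x) ∧ Collin (0, γ 0) (x, β x) (af x, α (af x))) ∧
        (cf x ∈ Icc (-r) r ∧ x ∈ uIcc 0 (cf x) ∧ Collin (0, α 0) (x, β x) (cf x, γ (cf x))) := by
  have hD : D ∈ 𝓝 0 := hsys.isOpen.mem_nhds hsys.zeroMem
  obtain ⟨r, hr, hrD⟩ := Metric.nhds_basis_closedBall.mem_iff.1 hD
  rw [Real.closedBall_eq_Icc, zero_sub, zero_add] at hrD
  have hβ0 : ContinuousAt β 0 := hsys.contB.continuousAt hD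
  have hA := eventually_exists_collin_through_apex hr hβ0 (hsys.contA.mono hrD) fun x hx =>
    mul_pos_of_neg_of_neg (sub_neg.2 (hsys.ltAB x (hrD hx))) (sub_neg.2 (hsys.ltBC 0 hsys.zeroMem))
  have hC := eventually_exists_collin_through_apex hr hβ0 (hsys.contC.mono hrD) fun x hx =>
    mul_pos (sub_pos.2 (hsys.ltBC x (hrD hx))) (sub_pos.2 (hsys.ltAB 0 hsys.zeroMem))
  obtain ⟨ε, hε, hball⟩ := Metric.eventually_nhds_iff_ball.1
    ((hA.and hC).and (Icc_mem_nhds (neg_lt_zero.2 hr) hr))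
  rw [Real.ball_eq_Ioo, zero_sub, zero_add] at hball
  choose! af haf using fun x hx => (hball x hx).1.1
  choose! cf hcf using fun x hx => (hball x hx).1.2
  exact ⟨r, ε, hε, fun x hx => (hball x hx).2, hrD, af, cf, fun x hx => ⟨haf x hx, hcf x hx⟩⟩

theorem exists_outer_points (hsys : StdSystem D α β γ) :
    ∃ r ε : ℝ, 0 < ε ∧ Ioo (-ε) ε ⊆ Icc (-r) r ∧ Icc (-r) r ⊆ D ∧ ∃ af cf : ℝ → ℝ,
      ContinuousOn (fun x => (af x, α (af x))) (Ioo (-ε) ε) ∧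
      ContinuousOn (fun x => (cf x, γ (cf x))) (Ioo (-ε) ε) ∧
      ∀ x ∈ Ioo (-ε) ε,
        (af x ∈ Icc (-r) r ∧ x ∈ uIcc 0 (af x) ∧
          IsUniqueCollinPoint (FunGraph α D) (0, γ 0) (x, β x) (af x, α (af x))) ∧
        (cf x ∈ Icc (-r) r ∧ x ∈ uIcc 0 (cf x) ∧
          IsUniqueCollinPoint (FunGraph γ D) (0, α 0) (x, β x) (cf x, γ (cf x))) := by
  obtain ⟨r, ε, hε, hUK, hKD, af, cf, hac⟩ := hsys.exists_outer_coords
  have hUD := hUK.trans hKD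
  have hP : ContinuousOn (fun x => ((x, β x) : ℝ × ℝ)) (Ioo (-ε) ε) :=
    continuousOn_id.prodMk (hsys.contB.mono hUD)
  have hγα : γ ≠ α := Function.ne_iff.2 ⟨0, (hsys.ltAC hsys.zeroMem).ne'⟩
  obtain ⟨hAc, hA⟩ := hsys.continuousOn_and_isUniqueCollinPoint (by simp) (by simp) hγα
    isCompact_Icc hKD continuousOn_const hP (fun x hx => mk_ne_mk_of_ne (hsys.ltBC x (hUD hx)).ne')
    (fun _ _ => ⟨hsys.zeroMem, rfl⟩) (fun x hx => (hac x hx).1.1) fun x hx => (hac x hx).1.2.2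
  obtain ⟨hCc, hC⟩ := hsys.continuousOn_and_isUniqueCollinPoint (by simp) (by simp) hγα.symm
    isCompact_Icc hKD continuousOn_const hP (fun x hx => mk_ne_mk_of_ne (hsys.ltAB x (hUD hx)).ne)
    (fun _ _ => ⟨hsys.zeroMem, rfl⟩) (fun x hx => (hac x hx).2.1) fun x hx => (hac x hx).2.2.2
  exact ⟨r, ε, hε, hUK, hKD, af, cf, hAc, hCc, fun x hx =>
    ⟨⟨(hac x hx).1.1, (hac x hx).1.2.1, hA x hx⟩, ⟨(hac x hx).2.1, (hac x hx).2.2.1, hC x hx⟩⟩⟩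

end StdSystem

/-- For a standard system `α, β, γ`, near `0` the auxiliary points `A(P)`, `B(P)`,
`C(P)` exist, are unique, and depend continuously on `P = (x, β(x))`; moreover every
point of the middle graph close enough to the `y`-axis is of the form `B(P)`. -/
theorem continuity_of_construction (D : Set ℝ) (α β γ : ℝ → ℝ)
    (hsys : StdSystem D α β γ) :
    ∃ ε > (0 : ℝ), Set.Ioo (-ε) ε ⊆ D ∧
      ∃ Af Bf Cf : ℝ → ℝ × ℝ,
        ContinuousOn Af (Set.Ioo (-ε) ε) ∧ ContinuousOn Bf (Set.Ioo (-ε) ε) ∧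
        ContinuousOn Cf (Set.Ioo (-ε) ε) ∧
        (∀ x ∈ Set.Ioo (-ε) ε,
          (Cf x ∈ FunGraph γ D ∧ ((0 : ℝ), γ 0) ≠ (x, β x) ∧
              Collin ((0 : ℝ), α 0) (x, β x) (Cf x) ∧
              ∀ Q ∈ FunGraph γ D, Collin ((0 : ℝ), α 0) (x, β x) Q → Q = Cf x) ∧
          (Af x ∈ FunGraph α D ∧ ((0 : ℝ), α 0) ≠ (x, β x) ∧
              Collin ((0 : ℝ), γ 0) (x, β x) (Af x) ∧
              ∀ Q ∈ FunGraph α D, Collin ((0 : ℝ), γ 0) (x, β x) Q → Q = Af x) ∧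
          (Bf x ∈ FunGraph β D ∧ Collin (Af x) (Bf x) (Cf x) ∧
              ∀ Q ∈ FunGraph β D, Collin (Af x) Q (Cf x) → Q = Bf x)) ∧
        ∃ δ > (0 : ℝ), ∀ x' ∈ D, |x'| < δ →
          ∃ x ∈ Set.Ioo (-ε) ε, ((x', β x') : ℝ × ℝ) = Bf x := by
  obtain ⟨r, ε, hε, hUK, hKD, af, cf, hAc, hCc, hout⟩ := hsys.exists_outer_points
  have hUD := hUK.trans hKD
  have hACK x (hx : x ∈ Ioo (-ε) ε) : uIcc (af x) (cf x) ⊆ Icc (-r) r :=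
    ordConnected_Icc.uIcc_subset (hout x hx).1.1 (hout x hx).2.1
  choose! bf hbf using fun x hx => exists_collin_of_lt_of_gt (f := β)
    (hsys.contB.mono ((hACK x hx).trans hKD)) (hsys.ltAB _ (hKD (hout x hx).1.1))
    (hsys.ltBC _ (hKD (hout x hx).2.1))
  obtain ⟨hBc, hB⟩ := hsys.continuousOn_and_isUniqueCollinPoint (f := β) (h := α) (by simp)
    (by simp) (Function.ne_iff.2 ⟨0, (hsys.ltAB 0 hsys.zeroMem).ne⟩) isCompact_Icc hKD hAc hCc
    (fun x hx => mk_ne_mk_of_ne (hsys.ltAC (hKD (hout x hx).2.1)).ne)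
    (fun x hx => (hout x hx).1.2.2.1) (fun x hx => hACK x hx (hbf x hx).1) fun x hx => (hbf x hx).2
  refine ⟨ε, hε, hUD, _, _, _, hAc, hBc, hCc, fun x hx => ?_, ε / 2, half_pos hε,
    fun x' _ hx' => ?_⟩
  · obtain ⟨⟨-, -, hA₁, hA₂, hA₃⟩, -, -, hC₁, hC₂, hC₃⟩ := hout x hx
    obtain ⟨hB₁, hB₂, hB₃⟩ := hB x hx
    exact ⟨⟨hC₁, mk_ne_mk_of_ne (hsys.ltBC x (hUD hx)).ne', hC₂, hC₃⟩,
      ⟨hA₁, mk_ne_mk_of_ne (hsys.ltAB x (hUD hx)).ne, hA₂, hA₃⟩,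
      hB₁, collin_swap.1 hB₂, fun Q hQ hQc => hB₃ Q hQ (collin_swap.1 hQc)⟩
  · have hsub : Icc (-(ε / 2)) (ε / 2) ⊆ Ioo (-ε) ε := Icc_subset_Ioo (by linarith) (by linarith)
    obtain ⟨x, hx, rfl⟩ := Icc_subset_image_of_mem_uIcc (half_pos hε) (hBc.fst.mono hsub)
      (fun x hx => mem_uIcc_of_mem_uIcc_of_mem_uIcc (hout x (hsub hx)).1.2.1
        (hout x (hsub hx)).2.2.1 (hbf x (hsub hx)).1) (Ioo_subset_Icc_self (abs_lt.1 hx'))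
    exact ⟨x, hsub hx, rfl⟩
end

section
/- Let α, β, γ be a standard system of continuous real functions, set A₀ = (0, α(0)), B₀ = (0, β(0)), C₀ = (0, γ(0)), and assume collinearity between ᾱ, β̄ and γ̄ is described by a commutative group operation (A, ⊕) via parametrisations (jointly denoted f). Let P ∈ β̄, A ∈ ᾱ, C ∈ γ̄ and B ∈ β̄ be points such that the triples (C₀, P, A), (A₀, P, C) and (A, B, C) are each collinear (with distinct members). Then: (i) if f(P) = f(B₀) ⊕ p and f(B) = f(B₀) ⊕ b, then b = p ⊕ p; (ii) for every B ∈ β̄ sufficiently close to B₀ there exists such a point P ∈ β̄ with f(P) ⊖ f(B₀) ⊕ f(P) ⊖ f(B₀) = f(B) ⊖ f(B₀). -/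
/-- Collinearity between the three curves `Γ₁, Γ₂, Γ₃` is described by the abelian
topological group `A` via the (joint) parametrisation `f`: each restriction of `f` is
a topological embedding (continuous injection which is a homeomorphism onto its
image), and three distinct points, one on each curve, are collinear iff their
`f`-values sum to `0`. -/
def DescribesCollin {A : Type*} [AddCommGroup A] [TopologicalSpace A]
    (Γ₁ Γ₂ Γ₃ : Set (ℝ × ℝ)) (f : ℝ × ℝ → A) : Prop :=
  Topology.IsEmbedding (Γ₁.restrict f) ∧ Topology.IsEmbedding (Γ₂.restrict f) ∧
  Topology.IsEmbedding (Γ₃.restrict f) ∧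
  ∀ P₁ ∈ Γ₁, ∀ P₂ ∈ Γ₂, ∀ P₃ ∈ Γ₃, P₁ ≠ P₂ → P₁ ≠ P₃ → P₂ ≠ P₃ →
    (Collin P₁ P₂ P₃ ↔ f P₁ + f P₂ + f P₃ = 0)

open Set Filter Topology

lemma zero_mem_uIcc_of_mul_nonpos {a b : ℝ} (h : a * b ≤ 0) : (0 : ℝ) ∈ uIcc a b := by
  rw [mem_uIcc]
  rcases mul_nonpos_iff.1 h with h | h
  exacts [Or.inr h.symm, Or.inl h]

lemma mem_uIcc_of_mem_uIcc_of_mem_uIcc_s7 {x y a b c : ℝ} (ha : y ∈ uIcc x a) (hc : y ∈ uIcc x c)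
    (hb : b ∈ uIcc a c) : y ∈ uIcc x b := by
  simp only [mem_uIcc] at *
  grind

lemma Wbtw.fst_mem_uIcc {p q r : ℝ × ℝ} (h : Wbtw ℝ p q r) : q.1 ∈ uIcc p.1 r.1 := by
  rw [← segment_eq_uIcc, mem_segment_iff_wbtw]
  exact h.map (AffineMap.fst)

lemma Collin.symm {p q r : ℝ × ℝ} (h : Collin p q r) : Collin r q p := by
  rwa [Collin, insert_comm, pair_comm, insert_comm]

lemma collin_of_fst_eq {p q r : ℝ × ℝ} (hq : q.1 = p.1) (hr : r.1 = p.1) : Collin p q r := by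
  rw [Collin, collinear_iff_of_mem (p₀ := p) (mem_insert _ _)]
  refine ⟨(0, 1), fun s hs => ⟨s.2 - p.2, ?_⟩⟩
  rcases hs with rfl | rfl | rfl <;> ext <;> simp [*]

lemma disjoint_funGraph {g h : ℝ → ℝ} {D : Set ℝ} (hgh : ∀ x ∈ D, g x < h x) :
    Disjoint (FunGraph g D) (FunGraph h D) :=
  disjoint_left.2 fun p hg hh => (hgh p.1 hg.1).ne (hg.2.symm.trans hh.2)

namespace DescribesCollin

variable {A : Type*} [AddCommGroup A] [TopologicalSpace A] {Γ₁ Γ₂ Γ₃ : Set (ℝ × ℝ)}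
  {f : ℝ × ℝ → A}

theorem add_add_eq_zero (hf : DescribesCollin Γ₁ Γ₂ Γ₃ f) (h₁₂ : Disjoint Γ₁ Γ₂)
    (h₁₃ : Disjoint Γ₁ Γ₃) (h₂₃ : Disjoint Γ₂ Γ₃) {P₁ P₂ P₃ : ℝ × ℝ} (h₁ : P₁ ∈ Γ₁)
    (h₂ : P₂ ∈ Γ₂) (h₃ : P₃ ∈ Γ₃) (h : Collin P₁ P₂ P₃) : f P₁ + f P₂ + f P₃ = 0 :=
  (hf.2.2.2 P₁ h₁ P₂ h₂ P₃ h₃ (h₁₂.ne_of_mem h₁ h₂) (h₁₃.ne_of_mem h₁ h₃)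
    (h₂₃.ne_of_mem h₂ h₃)).1 h

theorem add_eq_add_of_collin (hf : DescribesCollin Γ₁ Γ₂ Γ₃ f) (h₁₂ : Disjoint Γ₁ Γ₂)
    (h₁₃ : Disjoint Γ₁ Γ₃) (h₂₃ : Disjoint Γ₂ Γ₃) {A₀ A B₀ B P C₀ C : ℝ × ℝ}
    (hA₀ : A₀ ∈ Γ₁) (hA : A ∈ Γ₁) (hB₀ : B₀ ∈ Γ₂) (hB : B ∈ Γ₂) (hP : P ∈ Γ₂) (hC₀ : C₀ ∈ Γ₃)
    (hC : C ∈ Γ₃) (h₀ : Collin A₀ B₀ C₀) (hC₀PA : Collin C₀ P A) (hA₀PC : Collin A₀ P C)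
    (hABC : Collin A B C) : f B + f B₀ = f P + f P := by
  have e₀ := hf.add_add_eq_zero h₁₂ h₁₃ h₂₃ hA₀ hB₀ hC₀ h₀
  have e₁ := hf.add_add_eq_zero h₁₂ h₁₃ h₂₃ hA hP hC₀ hC₀PA.symm
  have e₂ := hf.add_add_eq_zero h₁₂ h₁₃ h₂₃ hA₀ hP hC hA₀PC
  have e₃ := hf.add_add_eq_zero h₁₂ h₁₃ h₂₃ hA hB hC hABC
  linear_combination (norm := abel) e₃ - e₁ - e₂ + e₀

end DescribesCollin

section Topology

variable {X Y Z : Type*} [TopologicalSpace X] [TopologicalSpace Y] [TopologicalSpace Z]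

lemma continuousOn_of_isInducing_domRestrict {g : Y → Z} {s : Set Y}
    (hg : IsInducing (s.domRestrict g)) {ψ : X → Y} {t : Set X} (hψ : MapsTo ψ t s) (h : ContinuousOn (g ∘ ψ) t) :
    ContinuousOn ψ t := by
  rw [continuousOn_iff_continuous_domRestrict] at h ⊢
  have hψ' : Continuous (hψ.restrict ψ t s) := hg.continuous_iff.2 h
  exact continuous_subtype_val.comp hψ'

lemma isEmbedding_domRestrict_graph {f : ℝ × ℝ → Z} {k : ℝ → ℝ} {D : Set ℝ}
    (hk : ContinuousOn k D) (hf : IsEmbedding ((FunGraph k D).domRestrict f)) :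
    IsEmbedding (D.domRestrict fun x => f (x, k x)) := by
  have hgraph : IsEmbedding fun x : D => (⟨(x, k x), x.2, rfl⟩ : FunGraph k D) :=
    Function.LeftInverse.isEmbedding (f := fun p : FunGraph k D => (⟨p.1.1, p.2.1⟩ : D))
      (fun _ => rfl) (by fun_prop)
      ((continuous_subtype_val.prodMk (continuousOn_iff_continuous_domRestrict.1 hk)).subtype_mk _)
  exact hf.comp hgraph

lemma image_Icc_subset_image_Icc_of_isEmbedding {g h : ℝ → Z} {D : Set ℝ} {δ : ℝ} (hδ : 0 < δ)
    (hg : IsEmbedding (D.domRestrict g)) (hh : ContinuousOn h (Icc (-δ) δ))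
    (hgh : ∀ y ∈ Icc (-δ) δ, ∃ x ∈ D, y ∈ uIcc 0 x ∧ g x = h y) :
    g '' Icc (-δ) δ ⊆ h '' Icc (-δ) δ := by
  choose! ψ hψD hψ hgψ using hgh
  have hψc : ContinuousOn ψ (Icc (-δ) δ) :=
    continuousOn_of_isInducing_domRestrict hg.isInducing hψD (hh.congr hgψ)
  have hψδ : δ ≤ ψ δ := by
    rcases mem_uIcc.1 (hψ δ (right_mem_Icc.2 (by linarith))) with h | h <;> linarith [h.1, h.2]
  have hψδ' : ψ (-δ) ≤ -δ := by
    rcases mem_uIcc.1 (hψ (-δ) (left_mem_Icc.2 (by linarith))) with h | h <;> linarith [h.1, h.2]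
  rintro _ ⟨x, hx, rfl⟩
  obtain ⟨y, hy, rfl⟩ := isPreconnected_Icc.intermediate_value (left_mem_Icc.2 (by linarith))
    (right_mem_Icc.2 (by linarith)) hψc ⟨hψδ'.trans hx.1, hx.2.trans hψδ⟩
  exact ⟨y, hy, (hgψ y hy).symm⟩

end Topology

section Construction

lemma exists_one_le_lt_mul (a : ℝ) {b : ℝ} (hb : 0 < b) : ∃ T ≥ 1, a < T * b :=
  ⟨|a| / b + 1, by have := div_nonneg (abs_nonneg a) hb.le; linarith,
    by rw [add_mul, div_mul_cancel₀ _ hb.ne']; linarith [le_abs_self a]⟩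

variable {D : Set ℝ}

theorem exists_mem_segment_mem_funGraph {g : ℝ → ℝ} (hD : D.OrdConnected)
    (hg : ContinuousOn g D) {p q : ℝ × ℝ} (hp : p.1 ∈ D) (hq : q.1 ∈ D)
    (hpq : (p.2 - g p.1) * (q.2 - g q.1) ≤ 0) : ∃ X ∈ segment ℝ p q, X ∈ FunGraph g D := by
  have hfst : MapsTo Prod.fst (segment ℝ p q) D := fun X hX =>
    hD.uIcc_subset hp hq (mem_segment_iff_wbtw.1 hX).fst_mem_uIcc
  have he : ContinuousOn (fun X : ℝ × ℝ => X.2 - g X.1) (segment ℝ p q) :=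
    continuous_snd.continuousOn.sub (hg.comp continuous_fst.continuousOn hfst)
  obtain ⟨X, hX, hX0⟩ := ((convex_segment p q).isPreconnected.image _ he).ordConnected.uIcc_subset
    (mem_image_of_mem _ (left_mem_segment ℝ p q)) (mem_image_of_mem _ (right_mem_segment ℝ p q))
    (zero_mem_uIcc_of_mul_nonpos hpq)
  exact ⟨X, hX, hfst hX, sub_eq_zero.1 hX0⟩

theorem eventually_exists_wbtw_mem_funGraph {g k : ℝ → ℝ} (hD : D.OrdConnected)
    (hD0 : D ∈ 𝓝 0) (hg : ContinuousOn g D) (hk : ContinuousOn k D) {z T : ℝ} (hT : 1 ≤ T)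
    (hopp : (k 0 - g 0) * (z + T * (k 0 - z) - g 0) < 0) :
    ∀ᶠ y in 𝓝 0, ∃ X ∈ FunGraph g D, Wbtw ℝ ((0 : ℝ), z) (y, k y) X := by
  have hT0 : Tendsto (T * ·) (𝓝 0) (𝓝 0) := by
    simpa using (continuous_const_mul T).tendsto (0 : ℝ)
  have hg0 := hg.continuousAt hD0
  have hk0 := hk.continuousAt hD0
  -- The point `(T * y, z + T * (k y - z))` of the ray from `(0, z)` through `(y, k y)` tends to
  -- `(0, z + T * (k 0 - z))` as `y → 0`, so it stays on the other side of the graph of `g`.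
  have hside : ContinuousAt (fun y => (k y - g y) * (z + T * (k y - z) - g (T * y))) 0 :=
    (hk0.sub hg0).mul ((continuousAt_const.add (continuousAt_const.mul
      (hk0.sub continuousAt_const))).sub
        (hg0.comp_of_eq (continuous_const_mul T).continuousAt (mul_zero T)))
  filter_upwards [hD0, hT0 hD0, hside.eventually (eventually_lt_nhds (by simpa using hopp))]
    with y hy hTy hyopp
  obtain ⟨X, hX, hXg⟩ := exists_mem_segment_mem_funGraph (p := (y, k y))
    (q := (T * y, z + T * (k y - z))) hD hg hy hTy hyopp.le
  have hfar : Wbtw ℝ ((0 : ℝ), z) (y, k y) (T * y, z + T * (k y - z)) := by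
    have hT₀ : T ≠ 0 := by positivity
    refine ⟨T⁻¹, ⟨by positivity, inv_le_one_of_one_le₀ hT⟩, ?_⟩
    ext <;> simp [AffineMap.lineMap_apply, hT₀]
  exact ⟨X, hXg, hfar.trans_right_left (mem_segment_iff_wbtw.1 hX)⟩

theorem eventually_exists_doubling_configuration {α β γ : ℝ → ℝ} (hD : D.OrdConnected)
    (hD0 : D ∈ 𝓝 0) (hα : ContinuousOn α D) (hβ : ContinuousOn β D) (hγ : ContinuousOn γ D)
    (hαβ : ∀ x ∈ D, α x < β x) (hβγ : ∀ x ∈ D, β x < γ x) :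
    ∀ᶠ y in 𝓝 0, ∃ A ∈ FunGraph α D, ∃ B ∈ FunGraph β D, ∃ C ∈ FunGraph γ D,
      Collin ((0 : ℝ), γ 0) (y, β y) A ∧ Collin ((0 : ℝ), α 0) (y, β y) C ∧ Collin A B C ∧
        y ∈ uIcc 0 B.1 := by
  have hαβ0 := hαβ 0 (mem_of_mem_nhds hD0)
  have hβγ0 := hβγ 0 (mem_of_mem_nhds hD0)
  obtain ⟨T₁, hT₁, hT₁A⟩ := exists_one_le_lt_mul (γ 0 - α 0) (sub_pos.2 hβγ0)
  obtain ⟨T₂, hT₂, hT₂C⟩ := exists_one_le_lt_mul (γ 0 - α 0) (sub_pos.2 hαβ0)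
  have hA := eventually_exists_wbtw_mem_funGraph hD hD0 hα hβ (z := γ 0) hT₁
    (mul_neg_of_pos_of_neg (by linarith) (by linear_combination hT₁A))
  have hC := eventually_exists_wbtw_mem_funGraph hD hD0 hγ hβ (z := α 0) hT₂
    (mul_neg_of_neg_of_pos (by linarith) (by linear_combination hT₂C))
  filter_upwards [hA, hC] with y ⟨A, hA, hC₀PA⟩ ⟨C, hC, hA₀PC⟩
  obtain ⟨B, hBAC, hB⟩ := exists_mem_segment_mem_funGraph hD hβ hA.1 hC.1
    (mul_nonpos_of_nonpos_of_nonneg (by linarith [hA.2, hαβ _ hA.1])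
      (by linarith [hC.2, hβγ _ hC.1]))
  have hABC := mem_segment_iff_wbtw.1 hBAC
  exact ⟨A, hA, B, hB, C, hC, hC₀PA.collinear, hA₀PC.collinear, hABC.collinear,
    mem_uIcc_of_mem_uIcc_of_mem_uIcc_s7 hC₀PA.fst_mem_uIcc hA₀PC.fst_mem_uIcc hABC.fst_mem_uIcc⟩

end Construction

namespace StdSystem

variable {A : Type*} [AddCommGroup A] [TopologicalSpace A] {D : Set ℝ} {α β γ : ℝ → ℝ}
  {f : ℝ × ℝ → A}

theorem add_eq_add_of_collin (hsys : StdSystem D α β γ)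
    (hf : DescribesCollin (FunGraph α D) (FunGraph β D) (FunGraph γ D) f)
    {P Ap Cp B : ℝ × ℝ} (hP : P ∈ FunGraph β D) (hAp : Ap ∈ FunGraph α D)
    (hCp : Cp ∈ FunGraph γ D) (hB : B ∈ FunGraph β D) (hC₀PA : Collin ((0 : ℝ), γ 0) P Ap)
    (hA₀PC : Collin ((0 : ℝ), α 0) P Cp) (hABC : Collin Ap B Cp) :
    f B + f ((0 : ℝ), β 0) = f P + f P :=
  hf.add_eq_add_of_collin (disjoint_funGraph hsys.ltAB)
    (disjoint_funGraph fun x hx => (hsys.ltAB x hx).trans (hsys.ltBC x hx))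
    (disjoint_funGraph hsys.ltBC) (A₀ := ((0 : ℝ), α 0)) (B₀ := ((0 : ℝ), β 0))
    (C₀ := ((0 : ℝ), γ 0)) ⟨hsys.zeroMem, rfl⟩ hAp ⟨hsys.zeroMem, rfl⟩ hB hP
    ⟨hsys.zeroMem, rfl⟩ hCp (collin_of_fst_eq rfl rfl) hC₀PA hA₀PC hABC

theorem eventually_exists_double (hsys : StdSystem D α β γ)
    (hf : DescribesCollin (FunGraph α D) (FunGraph β D) (FunGraph γ D) f) :
    ∀ᶠ y in 𝓝 0, y ∈ D ∧ ∃ x ∈ D, y ∈ uIcc 0 x ∧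
      f (x, β x) = f (y, β y) + f (y, β y) - f ((0 : ℝ), β 0) := by
  obtain ⟨r, hr, hrD⟩ := (nhds_basis_Ioo_pos (0 : ℝ)).mem_iff.1 (hsys.isOpen.mem_nhds hsys.zeroMem)
  set I := Ioo (0 - r) (0 + r)
  have hI : I ∈ 𝓝 0 := Ioo_mem_nhds (by linarith) (by linarith)
  have hgraph (g : ℝ → ℝ) : FunGraph g I ⊆ FunGraph g D := fun p hp => ⟨hrD hp.1, hp.2⟩
  filter_upwards [hI, eventually_exists_doubling_configuration ordConnected_Ioo hI
    (hsys.contA.mono hrD) (hsys.contB.mono hrD) (hsys.contC.mono hrD)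
    (fun x hx => hsys.ltAB x (hrD hx)) (fun x hx => hsys.ltBC x (hrD hx))]
    with y hy ⟨Ap, hAp, B, hB, Cp, hCp, hC₀PA, hA₀PC, hABC, hyB⟩
  refine ⟨hrD hy, B.1, hrD hB.1, hyB, ?_⟩
  rw [← hB.2]
  exact eq_sub_of_add_eq (hsys.add_eq_add_of_collin hf ⟨hrD hy, rfl⟩ (hgraph α hAp)
    (hgraph γ hCp) (hgraph β hB) hC₀PA hA₀PC hABC)

end StdSystem

/-- **Parameter-halving lemma.**  With `A₀ = (0,α(0))`, `B₀ = (0,β(0))`,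
`C₀ = (0,γ(0))`: (i) if `P ∈ β̄`, `A ∈ ᾱ`, `C ∈ γ̄`, `B ∈ β̄` with `(C₀,P,A)`,
`(A₀,P,C)`, `(A,B,C)` collinear triples of distinct points and
`f(P) = f(B₀) ⊕ p`, `f(B) = f(B₀) ⊕ b`, then `b = p ⊕ p`; (ii) for every `B ∈ β̄`
sufficiently close to `B₀` there is `P ∈ β̄` with
`(f(P) ⊖ f(B₀)) ⊕ (f(P) ⊖ f(B₀)) = f(B) ⊖ f(B₀)`. -/
theorem parameter_halving {A : Type} [AddCommGroup A] [TopologicalSpace A]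
    [IsTopologicalAddGroup A] (D : Set ℝ) (α β γ : ℝ → ℝ) (hsys : StdSystem D α β γ)
    (f : ℝ × ℝ → A)
    (hf : DescribesCollin (FunGraph α D) (FunGraph β D) (FunGraph γ D) f) :
    (∀ P ∈ FunGraph β D, ∀ Ap ∈ FunGraph α D, ∀ Cp ∈ FunGraph γ D, ∀ B ∈ FunGraph β D,
      ((0 : ℝ), γ 0) ≠ P → P ≠ Ap → ((0 : ℝ), γ 0) ≠ Ap →
      Collin ((0 : ℝ), γ 0) P Ap →
      ((0 : ℝ), α 0) ≠ P → P ≠ Cp → ((0 : ℝ), α 0) ≠ Cp →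
      Collin ((0 : ℝ), α 0) P Cp →
      Ap ≠ B → B ≠ Cp → Ap ≠ Cp → Collin Ap B Cp →
      ∀ p b : A, f P = f ((0 : ℝ), β 0) + p → f B = f ((0 : ℝ), β 0) + b →
        b = p + p) ∧
    (∃ ε > (0 : ℝ), ∀ B ∈ FunGraph β D, dist B (((0 : ℝ), β 0) : ℝ × ℝ) < ε →
      ∃ P ∈ FunGraph β D,
        (f P - f ((0 : ℝ), β 0)) + (f P - f ((0 : ℝ), β 0)) =
          f B - f ((0 : ℝ), β 0)) := by
  refine ⟨fun P hP Ap hAp Cp hCp B hB _ _ _ hC₀PA _ _ _ hA₀PC _ _ _ hABC p b hp hb => ?_, ?_⟩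
  · have h := hsys.add_eq_add_of_collin hf hP hAp hCp hB hC₀PA hA₀PC hABC
    rw [hp, hb] at h
    linear_combination (norm := abel) h
  obtain ⟨δ, hδ, hδI⟩ := (nhds_basis_Icc_pos (0 : ℝ)).eventually_iff.1
    (hsys.eventually_exists_double hf)
  simp only [zero_sub, zero_add] at hδI
  have hg := isEmbedding_domRestrict_graph hsys.contB hf.2.1
  have hgc : ContinuousOn (fun y => f (y, β y)) (Icc (-δ) δ) :=
    (continuousOn_iff_continuous_domRestrict.2 hg.continuous).mono fun y hy => (hδI hy).1
  refine ⟨δ, hδ, fun B hB hBδ => ?_⟩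
  have hB₁ : B.1 ∈ Icc (-δ) δ := by
    have hB₁δ : |B.1 - 0| < δ := (le_max_left _ _).trans_lt hBδ
    exact abs_le.1 (by simpa using hB₁δ.le)
  obtain ⟨y, hy, hyB⟩ := image_Icc_subset_image_Icc_of_isEmbedding hδ hg
    (h := fun y => f (y, β y) + f (y, β y) - f ((0 : ℝ), β 0))
    ((hgc.add hgc).sub continuousOn_const) (fun y hy => (hδI hy).2) (mem_image_of_mem _ hB₁)
  refine ⟨(y, β y), ⟨(hδI hy).1, rfl⟩, ?_⟩
  beta_reduce at hyB
  rw [show B = (B.1, β B.1) from Prod.ext rfl hB.2, ← hyB]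
  abel
end
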